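/- arXiv:1505.00036 — 2 statements merged into one kernel-verified Lean document; each statement's English description precedes it below -/
import Mathlib

section
/- Let v be a linear classifier on [0,1]^n with weights w and threshold q, and suppose w_i > w_j > 0. If x ∈ Piv_j(b) \ Piv_i(b) for some b ∈ [0,1], then f_ij(x) ∉ Piv_j(b) ∪ APiv_j(b). -/
/-
Write `S = ∑ w_k x_k`. The hypotheses say `S < q ≤ S + w_j (b - x_j)` and
`S + w_i (b - x_i) < q`; since `w_i > w_j > 0`, this forces `x_j < b` and `x_j < x_i`.
Swapping coordinates `i` and `j` of a point `z` changes its score by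
`(w_i - w_j)(z_j - z_i)`, which is negative when `z_j < z_i`. Hence the score of `f_ij(x)`
is below `S < q`, and, because setting coordinate `j` of `f_ij(x)` to `b` is the same as
swapping after setting coordinate `i` of `x` to `b`, that score is below
`S + w_i (b - x_i) < q` as well. So `f_ij(x)` loses both before and after the change.
-/

open MeasureTheory

/-- The linear classifier `v` on ℝ^n with weights w and threshold q. -/
noncomputable def linClass {n : ℕ} (w : Fin n → ℝ) (q : ℝ) (x : Fin n → ℝ) : ℝ :=
  if q ≤ ∑ k, w k * x k then 1 else 0

def unitCube (n : ℕ) : Set (Fin n → ℝ) := Set.univ.pi fun _ => Set.Icc 0 1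

/-- Piv_i(b). -/
noncomputable def pivSet {n : ℕ} (w : Fin n → ℝ) (q : ℝ) (i : Fin n) (b : ℝ) :
    Set (Fin n → ℝ) :=
  {x | x ∈ unitCube n ∧ linClass w q x = 0 ∧
    linClass w q (Function.update x i b) = 1}

/-- APiv_i(b). -/
noncomputable def apivSet {n : ℕ} (w : Fin n → ℝ) (q : ℝ) (i : Fin n) (b : ℝ) :
    Set (Fin n → ℝ) :=
  {x | x ∈ unitCube n ∧ linClass w q x = 1 ∧
    linClass w q (Function.update x i b) = 0}

/-- The map f_ij. -/
def swapCoords {n : ℕ} (i j : Fin n) (x : Fin n → ℝ) : Fin n → ℝ :=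
  x ∘ Equiv.swap i j

section WeightedSum

variable {ι R : Type*} [Fintype ι] [DecidableEq ι]

theorem sum_mul_update [CommRing R] (w x : ι → R) (i : ι) (b : R) :
    ∑ k, w k * Function.update x i b k = ∑ k, w k * x k + w i * (b - x i) := by
  rw [← sub_eq_iff_eq_add', ← Finset.sum_sub_distrib, Fintype.sum_eq_single i]
  · simp [mul_sub]
  · intro k hk
    simp [hk]

theorem sum_mul_comp_swap [CommRing R] (w x : ι → R) (i j : ι) :
    ∑ k, w k * (x ∘ Equiv.swap i j) k = ∑ k, w k * x k + (w i - w j) * (x j - x i) := by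
  rcases eq_or_ne i j with rfl | hij
  · simp
  rw [← sub_eq_iff_eq_add', ← Finset.sum_sub_distrib, Fintype.sum_eq_add i j hij]
  · simp only [Function.comp_apply, Equiv.swap_apply_left, Equiv.swap_apply_right]
    ring
  · rintro k ⟨hki, hkj⟩
    simp [Equiv.swap_apply_of_ne_of_ne hki hkj]

theorem sum_mul_comp_swap_lt [CommRing R] [LinearOrder R] [IsStrictOrderedRing R]
    {w x : ι → R} {i j : ι} (hw : w j < w i) (hx : x j < x i) :
    ∑ k, w k * (x ∘ Equiv.swap i j) k < ∑ k, w k * x k := by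
  rw [sum_mul_comp_swap]
  exact add_lt_of_neg_right _ (mul_neg_of_pos_of_neg (sub_pos.2 hw) (sub_neg.2 hx))

end WeightedSum

theorem linClass_eq_one_iff {n : ℕ} {w : Fin n → ℝ} {q : ℝ} {x : Fin n → ℝ} :
    linClass w q x = 1 ↔ q ≤ ∑ k, w k * x k := by
  unfold linClass
  split_ifs with h <;> simp [h]

theorem linClass_eq_zero_iff {n : ℕ} {w : Fin n → ℝ} {q : ℝ} {x : Fin n → ℝ} :
    linClass w q x = 0 ↔ ∑ k, w k * x k < q := by
  unfold linClass
  split_ifs with h <;> simpa using h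

theorem update_swapCoords {n : ℕ} (i j : Fin n) (x : Fin n → ℝ) (b : ℝ) :
    Function.update (swapCoords i j x) j b = swapCoords i j (Function.update x i b) := by
  simp [swapCoords, Function.update_comp_equiv]

theorem swap_not_piv_apiv_general
    {n : ℕ} (w : Fin n → ℝ) (q : ℝ)
    (i j : Fin n) (hij : w j < w i) (hj : 0 < w j)
    (b : ℝ)
    (x : Fin n → ℝ) (hx : x ∈ pivSet w q j b) (hx' : x ∉ pivSet w q i b) :
    swapCoords i j x ∉ pivSet w q j b ∪ apivSet w q j b := by
  obtain ⟨hcube, hx_lose, hxj_win⟩ := hx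
  have hS := linClass_eq_zero_iff.1 hx_lose
  have hSj := linClass_eq_one_iff.1 hxj_win
  have hSi : ∑ k, w k * Function.update x i b k < q := by
    by_contra h
    exact hx' ⟨hcube, hx_lose, linClass_eq_one_iff.2 (not_lt.1 h)⟩
  rw [sum_mul_update] at hSj hSi
  have hxj_lt_b : x j < b := by nlinarith
  have hxj_lt_xi : x j < x i := by nlinarith
  have hswap_lt : ∑ k, w k * swapCoords i j x k < q :=
    (sum_mul_comp_swap_lt hij hxj_lt_xi).trans hS
  have hswap_update_lt : ∑ k, w k * Function.update (swapCoords i j x) j b k < q := by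
    rw [update_swapCoords]
    refine (sum_mul_comp_swap_lt hij ?_).trans (by rwa [sum_mul_update])
    simpa [Function.update_of_ne (ne_of_apply_ne w hij.ne)] using hxj_lt_b
  rintro (⟨-, -, h⟩ | ⟨-, h, -⟩)
  · exact (linClass_eq_one_iff.1 h).not_gt hswap_update_lt
  · exact (linClass_eq_one_iff.1 h).not_gt hswap_lt

/-- If w_i > w_j > 0 and x ∈ Piv_j(b) \ Piv_i(b), then
f_ij(x) ∉ Piv_j(b) ∪ APiv_j(b). -/
theorem swap_not_piv_apiv
    {n : ℕ} (hn : 1 ≤ n) (w : Fin n → ℝ) (q : ℝ) (hw : ∀ k, w k ≠ 0)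
    (i j : Fin n) (hij : w j < w i) (hj : 0 < w j)
    (b : ℝ) (hb : b ∈ Set.Icc (0 : ℝ) 1)
    (x : Fin n → ℝ) (hx : x ∈ pivSet w q j b) (hx' : x ∉ pivSet w q i b) :
    swapCoords i j x ∉ pivSet w q j b ∪ apivSet w q j b :=
  swap_not_piv_apiv_general w q i j hij hj b x hx hx'
end

section
/- Let v be a linear classifier on [0,1]^n with weights w and threshold q. If w_i ≥ w_j > 0 then χ_i ≥ χ_j. -/
/-!
For `0 < w i` the classifier, restricted to the line through `x` in direction `e_i`, is the step
function at the flip point `τ = (q - ∑_{k ≠ i} w k x k) / w i`, which does not depend on `x i`.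
Hence `χ_i` is the average over `x` of the probability `2c(1 - c)`, `c = clamp₀₁ τ`, that two
independent uniform points of `[0,1]` fall on different sides of `τ`. Averaging in addition over
`x j` leaves, for each value `m` of `q` minus the sum over the other coordinates, the quantity
`pairInfluence (w i) (w j) m` for `χ_i` against `pairInfluence (w j) (w i) m` for `χ_j`. Both are
explicit through a primitive of the crossing probability and invariant under `m ↦ w i + w j - m`,
so for `m ≤ (w i + w j) / 2` the comparison is a polynomial inequality on each of the ranges
`m ≤ 0`, `0 ≤ m ≤ w j`, `w j ≤ m ≤ w i`.
-/

open MeasureTheory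

/-- The influence χ_i = ∫_0^1 ∫_{[0,1]^n} |v(x_{-i}, b) − v(x)| dx db. -/
noncomputable def chiLin {n : ℕ} (w : Fin n → ℝ) (q : ℝ) (i : Fin n) : ℝ :=
  ∫ b in Set.Icc (0 : ℝ) 1,
    ∫ x in unitCube n, |linClass w q (Function.update x i b) - linClass w q x|

open Set

section UpdateCoordinate

variable {ι : Type*} [Fintype ι] [DecidableEq ι] {X : ι → Type*}
  [∀ j, MeasurableSpace (X j)] (μ : ∀ j, Measure (X j)) [∀ j, SigmaFinite (μ j)] (i : ι)
  [IsProbabilityMeasure (μ i)]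

theorem measurePreserving_update :
    MeasurePreserving (fun p : (∀ j, X j) × X i => Function.update p.1 i p.2)
      ((Measure.pi μ).prod (μ i)) (Measure.pi μ) := by
  refine ⟨measurable_update', (Measure.pi_eq fun s hs => ?_).symm⟩
  have hpre : (fun p : (∀ j, X j) × X i => Function.update p.1 i p.2) ⁻¹' univ.pi s
      = univ.pi (Function.update s i univ) ×ˢ s i := by
    ext p
    simp only [mem_preimage, mem_pi, mem_univ, true_implies, mem_prod,
      Function.forall_update_iff s (fun j S => p.1 j ∈ S), Function.forall_update_iff]
    tauto
  rw [Measure.map_apply measurable_update' (MeasurableSet.univ_pi hs), hpre, Measure.prod_prod,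
    Measure.pi_pi]
  simp_rw [Function.apply_update (fun j S => μ j S)]
  rw [Finset.prod_update_of_mem (Finset.mem_univ i), measure_univ, one_mul,
    ← Finset.prod_sdiff (Finset.subset_univ {i}) (f := fun j => μ j (s j))]
  simp

theorem integral_pi_eq_integral_integral_update {E : Type*} [NormedAddCommGroup E]
    [NormedSpace ℝ E] {f : (∀ j, X j) → E} (hf : Integrable f (Measure.pi μ)) :
    ∫ x, f x ∂Measure.pi μ
      = ∫ x, ∫ t, f (Function.update x i t) ∂μ i ∂Measure.pi μ := by
  have hmp := measurePreserving_update μ i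
  have hmap := integral_map hmp.measurable.aemeasurable (hmp.map_eq ▸ hf.aestronglyMeasurable)
  rw [hmp.map_eq] at hmap
  exact hmap.trans (integral_prod _ (hmp.integrable_comp_of_integrable hf))

end UpdateCoordinate

noncomputable def clamp01 (u : ℝ) : ℝ := max 0 (min 1 u)

lemma clamp01_of_nonpos {u : ℝ} (h : u ≤ 0) : clamp01 u = 0 := by
  simp [clamp01, h, h.trans zero_le_one]

lemma clamp01_of_mem {u : ℝ} (h0 : 0 ≤ u) (h1 : u ≤ 1) : clamp01 u = u := by
  simp [clamp01, h0, h1]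

lemma clamp01_of_one_le {u : ℝ} (h : 1 ≤ u) : clamp01 u = 1 := by
  simp [clamp01, h]

lemma clamp01_mem_Icc (u : ℝ) : clamp01 u ∈ Icc 0 1 :=
  ⟨le_max_left _ _, max_le zero_le_one (min_le_left _ _)⟩

lemma clamp01_one_sub (u : ℝ) : clamp01 (1 - u) = 1 - clamp01 u := by
  rcases le_total u 0 with h | h
  · rw [clamp01_of_nonpos h, clamp01_of_one_le (by linarith)]; ring
  rcases le_total u 1 with h1 | h1
  · rw [clamp01_of_mem h h1, clamp01_of_mem (by linarith) (by linarith)]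
  · rw [clamp01_of_one_le h1, clamp01_of_nonpos (by linarith)]; ring

@[fun_prop]
lemma continuous_clamp01 : Continuous clamp01 := by unfold clamp01; fun_prop

lemma volume_real_Icc_inter_Ici (τ : ℝ) :
    volume.real (Icc (0 : ℝ) 1 ∩ Ici τ) = 1 - clamp01 τ := by
  have h : Icc (0 : ℝ) 1 ∩ Ici τ = Icc (max 0 τ) 1 := by ext v; simp; tauto
  rw [h, Real.volume_real_Icc]
  rcases le_total τ 0 with h | h
  · simp [clamp01_of_nonpos h, h]
  rcases le_total τ 1 with h1 | h1
  · simp [clamp01_of_mem h h1, h, h1]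
  · simp [clamp01_of_one_le h1, h, h1]

instance : IsProbabilityMeasure (volume.restrict (Icc (0 : ℝ) 1)) := ⟨by simp⟩

noncomputable abbrev uniformCube (n : ℕ) : Measure (Fin n → ℝ) :=
  Measure.pi fun _ => volume.restrict (Icc (0 : ℝ) 1)

lemma integral_Icc_ite_le (τ p r : ℝ) :
    ∫ t in Icc (0 : ℝ) 1, (if τ ≤ t then p else r)
      = p * (1 - clamp01 τ) + r * clamp01 τ := by
  have h : (fun t : ℝ => if τ ≤ t then p else r)
      = fun t => r + (Ici τ).indicator (fun _ => p - r) t := by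
    funext t
    by_cases h : τ ≤ t <;> simp [h]
  rw [h, integral_add (integrable_const r) ((integrable_const (p - r)).indicator measurableSet_Ici),
    setIntegral_const, setIntegral_indicator measurableSet_Ici, setIntegral_const,
    volume_real_Icc_inter_Ici]
  simp only [Real.volume_real_Icc, sub_zero, zero_le_one, sup_of_le_left, smul_eq_mul, one_mul]
  ring

/-- The probability that two independent uniform points of `[0,1]` lie on different sides
of `τ`. -/
noncomputable def crossProb (τ : ℝ) : ℝ := 2 * (clamp01 τ * (1 - clamp01 τ))

@[fun_prop]
lemma continuous_crossProb : Continuous crossProb := by unfold crossProb; fun_prop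

lemma intervalIntegrable_crossProb (a b : ℝ) : IntervalIntegrable crossProb volume a b :=
  continuous_crossProb.intervalIntegrable a b

lemma crossProb_of_nonpos {τ : ℝ} (h : τ ≤ 0) : crossProb τ = 0 := by
  simp [crossProb, clamp01_of_nonpos h]

lemma crossProb_of_one_le {τ : ℝ} (h : 1 ≤ τ) : crossProb τ = 0 := by
  simp [crossProb, clamp01_of_one_le h]

lemma crossProb_one_sub (τ : ℝ) : crossProb (1 - τ) = crossProb τ := by
  simp only [crossProb, clamp01_one_sub]; ring

lemma abs_crossProb_le_one (τ : ℝ) : |crossProb τ| ≤ 1 := by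
  have h := clamp01_mem_Icc τ
  rw [abs_le]
  unfold crossProb
  constructor <;> nlinarith [h.1, h.2, sq_nonneg (2 * clamp01 τ - 1)]

lemma integral_integral_abs_ite_sub_ite (τ : ℝ) :
    ∫ t in Icc (0 : ℝ) 1, ∫ b in Icc (0 : ℝ) 1,
      |(if τ ≤ b then 1 else 0) - (if τ ≤ t then 1 else 0)| = crossProb τ := by
  have inner : ∀ t, ∫ b in Icc (0 : ℝ) 1,
      |(if τ ≤ b then 1 else 0) - (if τ ≤ t then (1 : ℝ) else 0)|
        = if τ ≤ t then clamp01 τ else 1 - clamp01 τ := by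
    intro t
    by_cases ht : τ ≤ t
    · simpa [ht, apply_ite (fun y : ℝ => |y - 1|)] using integral_Icc_ite_le τ 0 1
    · simpa [ht, apply_ite (fun y : ℝ => |y|)] using integral_Icc_ite_le τ 1 0
  simp_rw [inner, integral_Icc_ite_le, crossProb]
  ring

noncomputable def crossPrim (u : ℝ) : ℝ := ∫ v in (0 : ℝ)..u, crossProb v

lemma crossPrim_of_nonpos {u : ℝ} (h : u ≤ 0) : crossPrim u = 0 := by
  rw [crossPrim, intervalIntegral.integral_congr (g := fun _ => 0), intervalIntegral.integral_zero]
  intro v hv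
  rw [uIcc_of_ge h] at hv
  exact crossProb_of_nonpos hv.2

lemma crossPrim_of_mem {u : ℝ} (h0 : 0 ≤ u) (h1 : u ≤ 1) :
    crossPrim u = u ^ 2 - 2 * u ^ 3 / 3 := by
  rw [crossPrim, intervalIntegral.integral_congr (g := fun v => 2 * v - 2 * v ^ 2)]
  · rw [intervalIntegral.integral_sub, intervalIntegral.integral_const_mul,
      intervalIntegral.integral_const_mul]
    · simp only [integral_id, integral_pow]
      ring
    all_goals exact (by fun_prop : Continuous _).intervalIntegrable _ _
  intro v hv
  rw [uIcc_of_le h0] at hv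
  simp only [crossProb, clamp01_of_mem hv.1 (hv.2.trans h1)]
  ring

lemma crossPrim_of_one_le {u : ℝ} (h : 1 ≤ u) : crossPrim u = 1 / 3 := by
  rw [crossPrim, ← intervalIntegral.integral_add_adjacent_intervals
      (intervalIntegrable_crossProb 0 1) (intervalIntegrable_crossProb 1 u),
    intervalIntegral.integral_congr (a := 1) (g := fun _ => 0), intervalIntegral.integral_zero]
  · rw [← crossPrim, crossPrim_of_mem zero_le_one le_rfl]; norm_num
  intro v hv
  rw [uIcc_of_le h] at hv
  exact crossProb_of_one_le hv.1

/-- The influence of a coordinate of weight `c`, averaged over a second coordinate of weight `d`,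
when the remaining coordinates leave the margin `m` to the threshold. -/
noncomputable def pairInfluence (c d m : ℝ) : ℝ :=
  ∫ t in (0 : ℝ)..1, crossProb ((m - d * t) / c)

lemma pairInfluence_eq {c d : ℝ} (hc : c ≠ 0) (hd : d ≠ 0) (m : ℝ) :
    pairInfluence c d m = c / d * (crossPrim (m / c) - crossPrim ((m - d) / c)) := by
  have harg : ∀ t, (m - d * t) / c = m / c - d / c * t := fun t => by ring
  simp_rw [pairInfluence, harg]
  rw [intervalIntegral.integral_comp_sub_mul _ (div_ne_zero hd hc), crossPrim, crossPrim,
    intervalIntegral.integral_interval_sub_left (intervalIntegrable_crossProb _ _)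
      (intervalIntegrable_crossProb _ _), inv_div, smul_eq_mul]
  congr 3 <;> ring

lemma pairInfluence_add_sub {c : ℝ} (hc : c ≠ 0) (d m : ℝ) :
    pairInfluence c d (c + d - m) = pairInfluence c d m := by
  have h := intervalIntegral.integral_comp_sub_left (fun t => crossProb ((m - d * t) / c))
    (a := 0) (b := 1) 1
  rw [sub_zero, sub_self] at h
  rw [pairInfluence, pairInfluence, ← h]
  congr 1 with t
  rw [← crossProb_one_sub]
  congr 1
  field_simp
  ring

@[fun_prop]
lemma continuous_pairInfluence (c d : ℝ) : Continuous (pairInfluence c d) := by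
  unfold pairInfluence; fun_prop

lemma abs_pairInfluence_le_one (c d m : ℝ) : |pairInfluence c d m| ≤ 1 := by
  simpa [pairInfluence] using intervalIntegral.norm_integral_le_of_norm_le_const (a := 0) (b := 1)
    (f := fun t => crossProb ((m - d * t) / c)) fun t _ => abs_crossProb_le_one _

lemma pairInfluence_of_nonpos {c d m : ℝ} (hc : 0 < c) (hd : 0 < d) (hm : m ≤ 0) :
    pairInfluence c d m = 0 := by
  rw [pairInfluence_eq hc.ne' hd.ne',
    crossPrim_of_nonpos (div_nonpos_of_nonpos_of_nonneg hm hc.le),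
    crossPrim_of_nonpos (div_nonpos_of_nonpos_of_nonneg (by linarith) hc.le), sub_self, mul_zero]

lemma pairInfluence_le_of_nonneg_of_le {c d m : ℝ} (hd : 0 < d) (hdc : d ≤ c) (h0 : 0 ≤ m)
    (hm : m ≤ d) : pairInfluence d c m ≤ pairInfluence c d m := by
  have hc : 0 < c := hd.trans_le hdc
  rw [pairInfluence_eq hc.ne' hd.ne', pairInfluence_eq hd.ne' hc.ne',
    crossPrim_of_nonpos (u := (m - d) / c) (div_nonpos_of_nonpos_of_nonneg (by linarith) hc.le),
    crossPrim_of_nonpos (u := (m - c) / d) (div_nonpos_of_nonpos_of_nonneg (by linarith) hd.le),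
    crossPrim_of_mem (u := m / d) (by positivity) ((div_le_one hd).2 hm),
    crossPrim_of_mem (by positivity) ((div_le_one hc).2 (hm.trans hdc))]
  have hdiff : c / d * ((m / c) ^ 2 - 2 * (m / c) ^ 3 / 3 - 0)
      - d / c * ((m / d) ^ 2 - 2 * (m / d) ^ 3 / 3 - 0)
        = 2 * m ^ 3 * (c - d) / (3 * c ^ 2 * d ^ 2) := by
    field_simp
    ring
  have : 0 ≤ 2 * m ^ 3 * (c - d) / (3 * c ^ 2 * d ^ 2) := by
    have := sub_nonneg.2 hdc
    positivity
  linarith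

lemma pairInfluence_le_of_le_of_le {c d m : ℝ} (hd : 0 < d) (hdm : d ≤ m) (hmc : m ≤ c) :
    pairInfluence d c m ≤ pairInfluence c d m := by
  have hc : 0 < c := hd.trans_le (hdm.trans hmc)
  rw [pairInfluence_eq hc.ne' hd.ne', pairInfluence_eq hd.ne' hc.ne',
    crossPrim_of_nonpos (u := (m - c) / d) (div_nonpos_of_nonpos_of_nonneg (by linarith) hd.le),
    crossPrim_of_one_le ((one_le_div hd).2 hdm),
    crossPrim_of_mem (div_nonneg (by linarith) hc.le) ((div_le_one hc).2 hmc),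
    crossPrim_of_mem (div_nonneg (by linarith) hc.le) ((div_le_one hc).2 (by linarith))]
  have hdiff : c / d * ((m / c) ^ 2 - 2 * (m / c) ^ 3 / 3
      - (((m - d) / c) ^ 2 - 2 * ((m - d) / c) ^ 3 / 3)) - d / c * (1 / 3 - 0)
        = (6 * (m - d) * (c - m) + 2 * d * (c - d)) / (3 * c ^ 2) := by
    field_simp
    ring
  have : 0 ≤ (6 * (m - d) * (c - m) + 2 * d * (c - d)) / (3 * c ^ 2) := by
    have := mul_nonneg (sub_nonneg.2 hdm) (sub_nonneg.2 hmc)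
    have := mul_nonneg hd.le (sub_nonneg.2 (hdm.trans hmc))
    exact div_nonneg (by nlinarith) (by positivity)
  linarith

lemma pairInfluence_le_pairInfluence {c d : ℝ} (hd : 0 < d) (hdc : d ≤ c) (m : ℝ) :
    pairInfluence d c m ≤ pairInfluence c d m := by
  have hc : 0 < c := hd.trans_le hdc
  wlog hm : 2 * m ≤ c + d generalizing m
  · have h := this (c + d - m) (by linarith)
    rwa [pairInfluence_add_sub hc.ne', add_comm c d, pairInfluence_add_sub hd.ne'] at h
  rcases le_total m 0 with h0 | h0
  · rw [pairInfluence_of_nonpos hd hc h0, pairInfluence_of_nonpos hc hd h0]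
  rcases le_total m d with hmd | hdm
  · exact pairInfluence_le_of_nonneg_of_le hd hdc h0 hmd
  · exact pairInfluence_le_of_le_of_le hd hdm (by linarith)

lemma sum_mul_update_of_notMem {ι : Type*} [DecidableEq ι] (w : ι → ℝ) {s : Finset ι}
    {i : ι} (hi : i ∉ s) (x : ι → ℝ) (t : ℝ) :
    ∑ k ∈ s, w k * Function.update x i t k = ∑ k ∈ s, w k * x k :=
  Finset.sum_congr rfl fun _ hk => by rw [Function.update_of_ne (ne_of_mem_of_not_mem hk hi)]

noncomputable def flipPoint {n : ℕ} (w : Fin n → ℝ) (q : ℝ) (i : Fin n)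
    (x : Fin n → ℝ) : ℝ :=
  (q - ∑ k ∈ Finset.univ.erase i, w k * x k) / w i

lemma linClass_update {n : ℕ} {w : Fin n → ℝ} {i : Fin n} (hi : 0 < w i) (q : ℝ)
    (x : Fin n → ℝ) (t : ℝ) :
    linClass w q (Function.update x i t) = if flipPoint w q i x ≤ t then 1 else 0 := by
  rw [linClass, ← Finset.add_sum_erase _ _ (Finset.mem_univ i), Function.update_self,
    sum_mul_update_of_notMem w (Finset.notMem_erase i _), flipPoint]
  simp only [div_le_iff₀ hi, sub_le_iff_le_add, mul_comm t]

lemma flipPoint_update_of_ne {n : ℕ} (w : Fin n → ℝ) (q : ℝ) {i j : Fin n} (hji : j ≠ i)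
    (x : Fin n → ℝ) (t : ℝ) :
    flipPoint w q i (Function.update x j t)
      = (q - ∑ k ∈ {i, j}ᶜ, w k * x k - w j * t) / w i := by
  have hrest : (Finset.univ.erase i).erase j = {i, j}ᶜ := by ext; simp; tauto
  rw [flipPoint, ← Finset.add_sum_erase _ _ (Finset.mem_erase.2 ⟨hji, Finset.mem_univ j⟩),
    hrest, Function.update_self, sum_mul_update_of_notMem w (by simp)]
  ring

@[fun_prop]
lemma continuous_flipPoint {n : ℕ} (w : Fin n → ℝ) (q : ℝ) (i : Fin n) :
    Continuous (flipPoint w q i) := by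
  unfold flipPoint; fun_prop

lemma measurable_linClass {n : ℕ} (w : Fin n → ℝ) (q : ℝ) : Measurable (linClass w q) :=
  Measurable.ite (measurableSet_le measurable_const (by fun_prop)) measurable_const measurable_const

lemma volume_restrict_unitCube (n : ℕ) : volume.restrict (unitCube n) = uniformCube n := by
  rw [unitCube, volume_pi, Measure.restrict_pi_pi]

theorem chiLin_eq_integral_crossProb {n : ℕ} {w : Fin n → ℝ} {i : Fin n} (hi : 0 < w i)
    (q : ℝ) : chiLin w q i = ∫ x, crossProb (flipPoint w q i x) ∂uniformCube n := by
  have hF : Integrable (fun p : (Fin n → ℝ) × ℝ =>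
      |linClass w q (Function.update p.1 i p.2) - linClass w q p.1|)
      ((uniformCube n).prod (volume.restrict (Icc (0 : ℝ) 1))) := by
    refine Integrable.of_bound ?_ 1 (ae_of_all _ fun p => ?_)
    · exact (((measurable_linClass w q).comp measurable_update').sub
        ((measurable_linClass w q).comp measurable_fst)).abs.aestronglyMeasurable
    · simp only [linClass, Real.norm_eq_abs, abs_abs]
      split_ifs <;> norm_num
  rw [chiLin, volume_restrict_unitCube, ← integral_integral_swap hF,
    integral_pi_eq_integral_integral_update _ i hF.integral_prod_left]
  refine integral_congr_ae (ae_of_all _ fun x => ?_)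
  simp only [Function.update_idem, linClass_update hi]
  exact integral_integral_abs_ite_sub_ite _

theorem chiLin_eq_integral_pairInfluence {n : ℕ} {w : Fin n → ℝ} {i j : Fin n} (hi : 0 < w i)
    (hji : j ≠ i) (q : ℝ) :
    chiLin w q i
      = ∫ x, pairInfluence (w i) (w j) (q - ∑ k ∈ {i, j}ᶜ, w k * x k) ∂uniformCube n := by
  have hint : Integrable (fun x => crossProb (flipPoint w q i x)) (uniformCube n) :=
    Integrable.of_bound (by fun_prop : Continuous _).aestronglyMeasurable 1
      (ae_of_all _ fun x => abs_crossProb_le_one _)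
  rw [chiLin_eq_integral_crossProb hi, integral_pi_eq_integral_integral_update _ j hint]
  refine integral_congr_ae (ae_of_all _ fun x => ?_)
  simp only [flipPoint_update_of_ne w q hji, pairInfluence, integral_Icc_eq_integral_Ioc,
    ← intervalIntegral.integral_of_le zero_le_one]

theorem chiLin_monotone_pos_weights_general
    {n : ℕ} (w : Fin n → ℝ) (q : ℝ)
    (i j : Fin n) (hij : w j ≤ w i) (hj : 0 < w j) :
    chiLin w q j ≤ chiLin w q i := by
  rcases eq_or_ne j i with rfl | hji
  · exact le_rfl
  have hint : ∀ c d, Integrable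
      (fun x => pairInfluence c d (q - ∑ k ∈ {i, j}ᶜ, w k * x k)) (uniformCube n) :=
    fun c d => Integrable.of_bound (by fun_prop : Continuous _).aestronglyMeasurable 1
      (ae_of_all _ fun x => abs_pairInfluence_le_one _ _ _)
  rw [chiLin_eq_integral_pairInfluence hj hji.symm, Finset.pair_comm j i,
    chiLin_eq_integral_pairInfluence (hj.trans_le hij) hji]
  exact integral_mono (hint _ _) (hint _ _) fun x => pairInfluence_le_pairInfluence hj hij _

/-- If w_i ≥ w_j > 0 then χ_i ≥ χ_j. -/
theorem chiLin_monotone_pos_weights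
    {n : ℕ} (hn : 1 ≤ n) (w : Fin n → ℝ) (q : ℝ) (hw : ∀ k, w k ≠ 0)
    (i j : Fin n) (hij : w j ≤ w i) (hj : 0 < w j) :
    chiLin w q j ≤ chiLin w q i :=
  chiLin_monotone_pos_weights_general w q i j hij hj
end
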